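/- arXiv:1007.2777 — 2 statements merged into one kernel-verified Lean document; each statement's English description precedes it below -/
import Mathlib

section
/- Let k be a field of characteristic ≠ 2, n ≥ 1, R = k[ε] the dual numbers over k, τ: R → R the k-algebra automorphism with τ(ε) = −ε (applied entrywise to matrices), J ∈ M_{2n}(k) ⊆ M_{2n}(R) the standard symplectic Gram matrix, σ(x) = J⁻¹·τ(x)ᵀ·J the associated involution of M_{2n}(R), and H = { x ∈ M_{2n}(R) : σ(x)·x = 1 and det x = 1 } the special unitary group. Then the map X ↦ 1 + εX is an isomorphism of groups from the additive group { X ∈ M_{2n}(k) : J⁻¹·Xᵀ·J = X and tr X = 0 } (the trace-zero symmetric endomorphisms for the adjoint involution of the symplectic form) onto the kernel { y ∈ H : ρ(y) = 1 } of the entrywise reduction map ρ (given by ε ↦ 0) restricted to H. -/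
open Matrix

noncomputable section

/-- The `k`-algebra automorphism `τ` of the dual numbers `k[ε]` with `τ(ε) = -ε`,
i.e. `a + bε ↦ a - bε`, as a plain function. -/
def dualConj (k : Type*) [Field k] : DualNumber k → DualNumber k :=
  fun x => TrivSqZeroExt.inl x.fst - TrivSqZeroExt.inr x.snd

/-- The standard symplectic Gram matrix `J = [[0, Iₙ], [-Iₙ, 0]]` over `k`. -/
def symplJ (k : Type*) [Field k] (n : ℕ) :
    Matrix (Fin n ⊕ Fin n) (Fin n ⊕ Fin n) k :=
  Matrix.fromBlocks 0 1 (-1) 0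

/-- `J` viewed as a matrix over the dual numbers `R = k[ε]`. -/
def symplJR (k : Type*) [Field k] (n : ℕ) :
    Matrix (Fin n ⊕ Fin n) (Fin n ⊕ Fin n) (DualNumber k) :=
  (symplJ k n).map (algebraMap k (DualNumber k))

/-- The involution `σ(x) = J⁻¹ ⬝ τ(x)ᵀ ⬝ J` of `M_{2n}(k[ε])`, where `τ` is applied
entrywise. -/
def dualInvolution (k : Type*) [Field k] (n : ℕ)
    (x : Matrix (Fin n ⊕ Fin n) (Fin n ⊕ Fin n) (DualNumber k)) :
    Matrix (Fin n ⊕ Fin n) (Fin n ⊕ Fin n) (DualNumber k) :=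
  (symplJR k n)⁻¹ * (xᵀ.map (dualConj k)) * symplJR k n

/-- The special unitary group `H = { x ∈ M_{2n}(k[ε]) : σ(x)·x = 1, det x = 1 }`. -/
def specialUnitary (k : Type*) [Field k] (n : ℕ) :
    Set (Matrix (Fin n ⊕ Fin n) (Fin n ⊕ Fin n) (DualNumber k)) :=
  {x | dualInvolution k n x * x = 1 ∧ x.det = 1}

/-- The entrywise reduction map `ρ : M_{2n}(k[ε]) → M_{2n}(k)` given by `ε ↦ 0`. -/
def dualRed (k : Type*) [Field k] (n : ℕ)
    (x : Matrix (Fin n ⊕ Fin n) (Fin n ⊕ Fin n) (DualNumber k)) :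
    Matrix (Fin n ⊕ Fin n) (Fin n ⊕ Fin n) k :=
  x.map TrivSqZeroExt.fst

/-- The additive group of trace-zero symmetric endomorphisms for the adjoint involution
of the symplectic form: `{ X ∈ M_{2n}(k) : J⁻¹·Xᵀ·J = X, tr X = 0 }`. -/
def symTraceZero (k : Type*) [Field k] (n : ℕ) :
    Set (Matrix (Fin n ⊕ Fin n) (Fin n ⊕ Fin n) k) :=
  {X | (symplJ k n)⁻¹ * Xᵀ * symplJ k n = X ∧ X.trace = 0}

/-- The map `X ↦ 1 + εX` from `M_{2n}(k)` to `M_{2n}(k[ε])`. -/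
def oneAddEps (k : Type*) [Field k] (n : ℕ)
    (X : Matrix (Fin n ⊕ Fin n) (Fin n ⊕ Fin n) k) :
    Matrix (Fin n ⊕ Fin n) (Fin n ⊕ Fin n) (DualNumber k) :=
  1 + X.map TrivSqZeroExt.inr

section Aux

open TrivSqZeroExt

variable {k : Type*} [Field k] {n : ℕ}

lemma aux_map_inr_mul_map_inr (A B : Matrix (Fin n ⊕ Fin n) (Fin n ⊕ Fin n) k) :
    (A.map (inr : k → DualNumber k)) * (B.map inr) = 0 := by
  refine Matrix.ext fun i j => ?_
  rw [Matrix.mul_apply]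
  simp only [Matrix.map_apply, inr_mul_inr, Matrix.zero_apply]
  exact Finset.sum_const_zero

lemma aux_map_inl_mul_map_inr (A B : Matrix (Fin n ⊕ Fin n) (Fin n ⊕ Fin n) k) :
    (A.map (inl : k → DualNumber k)) * (B.map inr) = (A * B).map inr := by
  refine Matrix.ext fun i j => ?_
  rw [Matrix.mul_apply, Matrix.map_apply, Matrix.mul_apply, inr_sum]
  simp only [Matrix.map_apply, inl_mul_inr, smul_eq_mul]

lemma aux_map_inr_mul_map_inl (A B : Matrix (Fin n ⊕ Fin n) (Fin n ⊕ Fin n) k) :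
    (A.map (inr : k → DualNumber k)) * (B.map inl) = (A * B).map inr := by
  refine Matrix.ext fun i j => ?_
  rw [Matrix.mul_apply, Matrix.map_apply, Matrix.mul_apply, inr_sum]
  simp only [Matrix.map_apply, inr_mul_inl, smul_eq_mul]
  exact Finset.sum_congr rfl fun x _ => by rw [op_smul_eq_smul, smul_eq_mul, mul_comm]

lemma aux_map_inr_injective :
    Function.Injective (fun A : Matrix (Fin n ⊕ Fin n) (Fin n ⊕ Fin n) k =>
      A.map (inr : k → DualNumber k)) := by
  intro A B h
  exact Matrix.ext fun i j => inr_injective (R := k) (congrFun (congrFun h i) j)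

lemma aux_map_inr_add (A B : Matrix (Fin n ⊕ Fin n) (Fin n ⊕ Fin n) k) :
    (A + B).map (inr : k → DualNumber k) = A.map inr + B.map inr := by
  refine Matrix.ext fun i j => ?_
  simp [Matrix.map_apply, inr_add, add_smul]

lemma aux_map_inr_sub (A B : Matrix (Fin n ⊕ Fin n) (Fin n ⊕ Fin n) k) :
    (A - B).map (inr : k → DualNumber k) = A.map inr - B.map inr := by
  refine Matrix.ext fun i j => ?_
  simp [Matrix.map_apply, sub_smul]

lemma aux_symplJ_mul_symplJ : symplJ k n * symplJ k n = -1 := by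
  have h1 : (-1 : Matrix (Fin n ⊕ Fin n) (Fin n ⊕ Fin n) k) =
      Matrix.fromBlocks (-1) 0 0 (-1) := by
    rw [← Matrix.fromBlocks_one, Matrix.fromBlocks_neg]
    simp
  rw [symplJ, Matrix.fromBlocks_multiply, h1]
  congr 1 <;> simp

lemma aux_symplJ_inv : (symplJ k n)⁻¹ = -(symplJ k n) :=
  Matrix.inv_eq_right_inv (by rw [mul_neg, aux_symplJ_mul_symplJ, neg_neg])

lemma aux_symplJR_eq : symplJR k n = (symplJ k n).map (inl : k → DualNumber k) := by
  rw [symplJR, algebraMap_eq_inl]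

lemma aux_map_inl_neg (A : Matrix (Fin n ⊕ Fin n) (Fin n ⊕ Fin n) k) :
    (-A).map (inl : k → DualNumber k) = -(A.map inl) := by
  refine Matrix.ext fun i j => ?_
  simp [Matrix.map_apply, inl_neg]

lemma aux_map_inl_one : ((1 : Matrix (Fin n ⊕ Fin n) (Fin n ⊕ Fin n) k)).map
    (inl : k → DualNumber k) = 1 := by
  rw [← algebraMap_eq_inl (R' := k) (M := k)]
  exact Matrix.map_one _ (map_zero _) (map_one _)

lemma aux_map_inl_mul_map_inl (A B : Matrix (Fin n ⊕ Fin n) (Fin n ⊕ Fin n) k) :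
    (A.map (inl : k → DualNumber k)) * (B.map inl) = (A * B).map inl := by
  rw [← algebraMap_eq_inl (R' := k) (M := k)]
  exact (Matrix.map_mul (f := algebraMap k (DualNumber k))).symm

lemma aux_symplJR_inv : (symplJR k n)⁻¹ = (-(symplJ k n)).map (inl : k → DualNumber k) := by
  refine Matrix.inv_eq_right_inv ?_
  rw [aux_symplJR_eq, aux_map_inl_mul_map_inl, mul_neg, aux_symplJ_mul_symplJ, neg_neg,
    aux_map_inl_one]

lemma aux_map_dualConj (X : Matrix (Fin n ⊕ Fin n) (Fin n ⊕ Fin n) k) :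
    ((1 : Matrix (Fin n ⊕ Fin n) (Fin n ⊕ Fin n) (DualNumber k)) + X.map inr).map (dualConj k)
      = 1 - X.map inr := by
  refine Matrix.ext fun i j => ?_
  by_cases h : i = j
  · subst h
    simp [dualConj, Matrix.map_apply, Matrix.add_apply, Matrix.sub_apply,
      Matrix.one_apply_eq]
  · simp [dualConj, Matrix.map_apply, Matrix.add_apply, Matrix.sub_apply,
      Matrix.one_apply_ne h]

/-- The key computation: `σ(1 + εX) = 1 - ε (J⁻¹ Xᵀ J)`. -/
lemma aux_dualInvolution_oneAddEps (X : Matrix (Fin n ⊕ Fin n) (Fin n ⊕ Fin n) k) :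
    dualInvolution k n (oneAddEps k n X)
      = 1 - ((symplJ k n)⁻¹ * Xᵀ * symplJ k n).map inr := by
  have h1 : (-symplJ k n).map (inl : k → DualNumber k) * (symplJ k n).map inl = 1 := by
    rw [aux_map_inl_mul_map_inl, neg_mul, aux_symplJ_mul_symplJ, neg_neg, aux_map_inl_one]
  have h2 : (-symplJ k n).map (inl : k → DualNumber k) * (Xᵀ.map inr) * (symplJ k n).map inl
      = ((-symplJ k n) * Xᵀ * symplJ k n).map inr := by
    rw [aux_map_inl_mul_map_inr, aux_map_inr_mul_map_inl]
  rw [dualInvolution, oneAddEps, Matrix.transpose_add, Matrix.transpose_one,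
    ← Matrix.transpose_map, aux_map_dualConj, aux_symplJR_inv, aux_symplJR_eq,
    aux_symplJ_inv, mul_sub, mul_one, sub_mul, h1, mul_assoc, ← mul_assoc, h2]

lemma aux_sigma_mul (X S : Matrix (Fin n ⊕ Fin n) (Fin n ⊕ Fin n) k) :
    (1 - S.map (inr : k → DualNumber k)) * (1 + X.map inr) = 1 + (X - S).map inr := by
  rw [sub_mul, one_mul, mul_add, mul_one, aux_map_inr_mul_map_inr, aux_map_inr_sub]
  abel

lemma aux_trace_map_inl (X : Matrix (Fin n ⊕ Fin n) (Fin n ⊕ Fin n) k) :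
    (X.map (algebraMap k (DualNumber k))).trace = algebraMap k (DualNumber k) X.trace := by
  rw [Matrix.trace, Matrix.trace, map_sum]
  rfl

lemma aux_eps_smul (X : Matrix (Fin n ⊕ Fin n) (Fin n ⊕ Fin n) k) :
    (DualNumber.eps : DualNumber k) • (X.map (algebraMap k (DualNumber k))) = X.map inr := by
  refine Matrix.ext fun i j => ?_
  rw [Matrix.smul_apply, Matrix.map_apply, Matrix.map_apply, smul_eq_mul,
    algebraMap_eq_inl, DualNumber.eps, inr_mul_inl, op_smul_eq_smul, smul_eq_mul, mul_one]

lemma aux_det_oneAddEps (X : Matrix (Fin n ⊕ Fin n) (Fin n ⊕ Fin n) k) :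
    (oneAddEps k n X).det = 1 + inr X.trace := by
  rw [oneAddEps, ← aux_eps_smul, Matrix.det_one_add_smul, aux_trace_map_inl]
  rw [pow_two, DualNumber.eps_mul_eps, mul_zero, add_zero, algebraMap_eq_inl,
    DualNumber.eps, inl_mul_inr, smul_eq_mul, mul_one]

lemma aux_dualRed_oneAddEps (X : Matrix (Fin n ⊕ Fin n) (Fin n ⊕ Fin n) k) :
    dualRed k n (oneAddEps k n X) = 1 := by
  refine Matrix.ext fun i j => ?_
  by_cases h : i = j
  · subst h
    simp [dualRed, oneAddEps, Matrix.map_apply, Matrix.add_apply, Matrix.one_apply_eq]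
  · simp [dualRed, oneAddEps, Matrix.map_apply, Matrix.add_apply, Matrix.one_apply_ne h]

lemma aux_eq_oneAddEps (y : Matrix (Fin n ⊕ Fin n) (Fin n ⊕ Fin n) (DualNumber k))
    (hy : dualRed k n y = 1) : y = oneAddEps k n (y.map snd) := by
  refine Matrix.ext fun i j => ?_
  have hf : (y i j).fst = (1 : Matrix (Fin n ⊕ Fin n) (Fin n ⊕ Fin n) k) i j :=
    congrFun (congrFun hy i) j
  rw [oneAddEps, Matrix.add_apply, Matrix.map_apply, Matrix.map_apply,
    ← inl_fst_add_inr_snd_eq (y i j), hf]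
  by_cases h : i = j
  · subst h; simp [Matrix.one_apply_eq]
  · simp [Matrix.one_apply_ne h]

end Aux

/-- The map `X ↦ 1 + εX` is an isomorphism of groups from the additive group
`{ X ∈ M_{2n}(k) : J⁻¹·Xᵀ·J = X, tr X = 0 }` onto the kernel `{ y ∈ H : ρ(y) = 1 }` of the
entrywise reduction `ρ` restricted to the special unitary group `H`. -/
theorem oneAddEps_bijOn_kernel
    (k : Type*) [Field k] (hchar : ringChar k ≠ 2) (n : ℕ) (hn : 1 ≤ n) :
    (∀ X ∈ symTraceZero k n,
        oneAddEps k n X ∈ specialUnitary k n ∧ dualRed k n (oneAddEps k n X) = 1) ∧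
    Set.InjOn (oneAddEps k n) (symTraceZero k n) ∧
    (∀ y ∈ specialUnitary k n, dualRed k n y = 1 →
        ∃ X ∈ symTraceZero k n, oneAddEps k n X = y) ∧
    (∀ X ∈ symTraceZero k n, ∀ Y ∈ symTraceZero k n,
        oneAddEps k n (X + Y) = oneAddEps k n X * oneAddEps k n Y) := by
  refine ⟨?_, ?_, ?_, ?_⟩
  · rintro X ⟨hsym, htr⟩
    refine ⟨⟨?_, ?_⟩, aux_dualRed_oneAddEps X⟩
    · rw [aux_dualInvolution_oneAddEps, oneAddEps, aux_sigma_mul, hsym, sub_self]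
      simp
    · rw [aux_det_oneAddEps, htr]
      simp
  · intro X _ Y _ h
    rw [oneAddEps, oneAddEps] at h
    exact aux_map_inr_injective (add_left_cancel h)
  · rintro y ⟨hsu, hdet⟩ hred
    set X := y.map TrivSqZeroExt.snd with hX
    have hy : y = oneAddEps k n X := aux_eq_oneAddEps y hred
    refine ⟨X, ⟨?_, ?_⟩, hy.symm⟩
    · have h1 : dualInvolution k n y * y = 1 := hsu
      rw [hy, aux_dualInvolution_oneAddEps, oneAddEps, aux_sigma_mul] at h1
      have h2 : (X - (symplJ k n)⁻¹ * Xᵀ * symplJ k n).map (TrivSqZeroExt.inr : k → DualNumber k) =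
          (0 : Matrix (Fin n ⊕ Fin n) (Fin n ⊕ Fin n) k).map TrivSqZeroExt.inr := by
        rw [add_eq_left.mp h1]
        exact (Matrix.map_zero _ (TrivSqZeroExt.inr_zero (R := k) (M := k))).symm
      have h3 := aux_map_inr_injective h2
      rw [sub_eq_zero] at h3
      exact h3.symm
    · have h1 : y.det = 1 := hdet
      rw [hy, aux_det_oneAddEps] at h1
      have h2 : TrivSqZeroExt.inr X.trace = (0 : DualNumber k) := add_eq_left.mp h1
      exact TrivSqZeroExt.inr_injective (h2.trans (TrivSqZeroExt.inr_zero (R := k) (M := k)).symm)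
  · intro X _ Y _
    rw [oneAddEps, oneAddEps, oneAddEps, add_mul, one_mul, mul_add, mul_one,
      aux_map_inr_mul_map_inr, add_zero, aux_map_inr_add]
    abel


end
end

section
/- Let k be a field of characteristic ≠ 2, n ≥ 1, R = k[ε] the dual numbers over k, τ: R → R the k-algebra automorphism with τ(ε) = −ε (applied entrywise to matrices), J ∈ M_{2n}(k) ⊆ M_{2n}(R) the standard symplectic Gram matrix, σ(x) = J⁻¹·τ(x)ᵀ·J the associated involution of M_{2n}(R), and H = { x ∈ M_{2n}(R) : σ(x)·x = 1 and det x = 1 } the special unitary group. Then the entrywise reduction map ρ (given by ε ↦ 0) restricts to a surjective group homomorphism from H onto the symplectic group Sp(2n, k) = { S ∈ M_{2n}(k) : Sᵀ·J·S = J }. -/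
open Matrix

noncomputable section

/-! The determinant condition on a lift comes for free because symplectic matrices over any
commutative ring have determinant `1` (`SymplecticGroup.det_eq_one`). Reduction `ρ` is a ring
homomorphism on matrices, and `τ` is trivial modulo `ε`, so `ρ` carries `σ(x)·x = 1`, i.e.
`τ(x)ᵀ·J·x = J`, to `ρ(x)ᵀ·J·ρ(x) = J`. Conversely a symplectic `S` over `k`, viewed as a
constant matrix over `k[ε]`, is fixed by `τ`, hence lies in `H`, and reduces to itself. -/

section

variable {k : Type*} [Field k] {n : ℕ}

theorem symplJ_eq_neg_J : symplJ k n = -J (Fin n) k := by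
  rw [symplJ, J, fromBlocks_neg]
  simp

theorem symplJR_eq_neg_J : symplJR k n = -J (Fin n) (DualNumber k) := by
  rw [symplJR, symplJ_eq_neg_J, Matrix.map_neg _ (map_neg _), map_J]

instance invertibleSymplJR : Invertible (symplJR k n) :=
  invertibleOfIsUnitDet _ <| by
    rw [symplJR_eq_neg_J, det_neg]
    exact (isUnit_neg_one.pow _).mul (isUnit_det_J _ _)

theorem mem_symplecticGroup_iff {S : Matrix (Fin n ⊕ Fin n) (Fin n ⊕ Fin n) k} :
    S ∈ symplecticGroup (Fin n) k ↔ Sᵀ * symplJ k n * S = symplJ k n := by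
  rw [SymplecticGroup.mem_iff', symplJ_eq_neg_J, Matrix.mul_neg, Matrix.neg_mul, neg_inj]

theorem dualRed_eq_mapMatrix (x : Matrix (Fin n ⊕ Fin n) (Fin n ⊕ Fin n) (DualNumber k)) :
    dualRed k n x = (TrivSqZeroExt.fstHom k k k).toRingHom.mapMatrix x :=
  rfl

theorem dualRed_mul (x y : Matrix (Fin n ⊕ Fin n) (Fin n ⊕ Fin n) (DualNumber k)) :
    dualRed k n (x * y) = dualRed k n x * dualRed k n y := by
  simp only [dualRed_eq_mapMatrix, map_mul]

theorem dualRed_symplJR : dualRed k n (symplJR k n) = symplJ k n :=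
  (symplJ k n).map_map.trans (symplJ k n).map_id

theorem dualRed_map_algebraMap (S : Matrix (Fin n ⊕ Fin n) (Fin n ⊕ Fin n) k) :
    dualRed k n (S.map (algebraMap k (DualNumber k))) = S :=
  S.map_map.trans S.map_id

theorem dualRed_map_dualConj_transpose
    (x : Matrix (Fin n ⊕ Fin n) (Fin n ⊕ Fin n) (DualNumber k)) :
    dualRed k n (xᵀ.map (dualConj k)) = (dualRed k n x)ᵀ := by
  ext i j
  simp [dualRed, dualConj]

theorem dualConj_algebraMap (a : k) :
    dualConj k (algebraMap k (DualNumber k) a) = algebraMap k (DualNumber k) a := by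
  simp [dualConj, TrivSqZeroExt.algebraMap_eq_inl]

theorem dualInvolution_mul_self_eq_one_iff
    (x : Matrix (Fin n ⊕ Fin n) (Fin n ⊕ Fin n) (DualNumber k)) :
    dualInvolution k n x * x = 1 ↔ xᵀ.map (dualConj k) * symplJR k n * x = symplJR k n := by
  rw [dualInvolution, Matrix.mul_assoc, Matrix.mul_assoc, inv_mul_eq_iff_eq_mul_of_invertible,
    Matrix.mul_one, Matrix.mul_assoc]

theorem symplectic_dualRed_of_mem_specialUnitary
    {x : Matrix (Fin n ⊕ Fin n) (Fin n ⊕ Fin n) (DualNumber k)} (hx : x ∈ specialUnitary k n) :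
    (dualRed k n x)ᵀ * symplJ k n * dualRed k n x = symplJ k n := by
  have h := congrArg (dualRed k n) ((dualInvolution_mul_self_eq_one_iff x).mp hx.1)
  rwa [dualRed_mul, dualRed_mul, dualRed_map_dualConj_transpose, dualRed_symplJR] at h

theorem map_algebraMap_mem_specialUnitary {S : Matrix (Fin n ⊕ Fin n) (Fin n ⊕ Fin n) k}
    (hS : Sᵀ * symplJ k n * S = symplJ k n) :
    S.map (algebraMap k (DualNumber k)) ∈ specialUnitary k n := by
  set φ := algebraMap k (DualNumber k)
  have hconj : (S.map φ)ᵀ.map (dualConj k) = Sᵀ.map φ := by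
    rw [transpose_map, transpose_map, Matrix.map_map,
      show dualConj k ∘ φ = φ from funext dualConj_algebraMap]
  refine ⟨(dualInvolution_mul_self_eq_one_iff _).mpr ?_, ?_⟩
  · rw [hconj, symplJR, ← Matrix.map_mul, ← Matrix.map_mul, hS]
  · rw [← RingHom.mapMatrix_apply, ← RingHom.map_det,
      SymplecticGroup.det_eq_one (mem_symplecticGroup_iff.mpr hS), map_one]

end

theorem dualRed_surjective_onto_symplectic_general
    (k : Type*) [Field k] (n : ℕ) :
    (∀ x ∈ specialUnitary k n,
        (dualRed k n x)ᵀ * symplJ k n * dualRed k n x = symplJ k n) ∧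
    (∀ S : Matrix (Fin n ⊕ Fin n) (Fin n ⊕ Fin n) k,
        Sᵀ * symplJ k n * S = symplJ k n →
        ∃ x ∈ specialUnitary k n, dualRed k n x = S) ∧
    (∀ x ∈ specialUnitary k n, ∀ y ∈ specialUnitary k n,
        dualRed k n (x * y) = dualRed k n x * dualRed k n y) :=
  ⟨fun _ hx => symplectic_dualRed_of_mem_specialUnitary hx,
    fun S hS => ⟨_, map_algebraMap_mem_specialUnitary hS, dualRed_map_algebraMap S⟩,
    fun x _ y _ => dualRed_mul x y⟩

/-- The reduction map `ρ` restricts to a surjective group homomorphism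
from `H` onto the symplectic group `Sp(2n, k) = { S : Sᵀ·J·S = J }`. -/
theorem dualRed_surjective_onto_symplectic
    (k : Type*) [Field k] (hchar : ringChar k ≠ 2) (n : ℕ) (hn : 1 ≤ n) :
    (∀ x ∈ specialUnitary k n,
        (dualRed k n x)ᵀ * symplJ k n * dualRed k n x = symplJ k n) ∧
    (∀ S : Matrix (Fin n ⊕ Fin n) (Fin n ⊕ Fin n) k,
        Sᵀ * symplJ k n * S = symplJ k n →
        ∃ x ∈ specialUnitary k n, dualRed k n x = S) ∧
    (∀ x ∈ specialUnitary k n, ∀ y ∈ specialUnitary k n,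
        dualRed k n (x * y) = dualRed k n x * dualRed k n y) :=
  dualRed_surjective_onto_symplectic_general k n

end
end
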